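/- (Validity for Crusader Agreement.) Under the Crusader Agreement hypotheses, for every v ∈ {v0, v1}: (1) if Someone output_v = T then Someone input_v = T; and (2) if input p v ≥ B for every p ∈ P, then for every v' ∈ Val, Someone output_{v'} = T implies v = v'. -/
import Mathlib


/-- The three truth values, encoded as `Fin 3` with `0 = F`, `1 = B`, `2 = T`. -/
abbrev TV : Type := Fin 3

/-- false -/ def tF : TV := 0
/-- both/byzantine -/ def tB : TV := 1
/-- true -/ def tT : TV := 2

/-- Negation on `TV`: `neg F = T`, `neg B = B`, `neg T = F`. -/
def tneg (x : TV) : TV := ⟨2 - x.val, by omega⟩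

/-- A semitopology: a collection of subsets containing the whole set and
closed under arbitrary unions. -/
structure Semitopology (P : Type*) where
  opens : Set (Set P)
  univ_mem : Set.univ ∈ opens
  sUnion_mem : ∀ S : Set (Set P), S ⊆ opens → ⋃₀ S ∈ opens

namespace Semitopology

variable {P : Type*}

noncomputable def Everyone (f : P → TV) : TV := ⨅ p, f p

noncomputable def Someone (f : P → TV) : TV := ⨆ p, f p

noncomputable def Quorum (S : Semitopology P) (f : P → TV) : TV :=
  ⨆ O ∈ {O | O ∈ S.opens ∧ O.Nonempty}, ⨅ p ∈ O, f p

noncomputable def Contraquorum (S : Semitopology P) (f : P → TV) : TV :=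
  ⨅ O ∈ {O | O ∈ S.opens ∧ O.Nonempty}, ⨆ p ∈ O, f p

/-- A semitopology is 3-twined when any three nonempty open sets have
nonempty intersection. -/
def ThreeTwined (S : Semitopology P) : Prop :=
  ∀ O₁ O₂ O₃ : Set P, O₁ ∈ S.opens → O₂ ∈ S.opens → O₃ ∈ S.opens →
    O₁.Nonempty → O₂.Nonempty → O₃.Nonempty → (O₁ ∩ O₂ ∩ O₃).Nonempty

end Semitopology

open Semitopology

/-- The three-element value set for Crusader Agreement. -/
inductive CVal : Type
  | v0 | vhalf | v1
deriving DecidableEq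

/-- Exclusive-or on `TV`: `B` if either argument is `B`; otherwise `T` if the
arguments differ and `F` if they agree. -/
def txor (x y : TV) : TV := if x = tB ∨ y = tB then tB else if x = y then tF else tT

lemma tv_eq_top (x : TV) (h1 : tB ≤ x) (h2 : x ≠ tB) : x = tT := by
  revert h1 h2; revert x; decide

lemma tv_top_of_not_le (x : TV) (h : ¬ x ≤ tB) : x = tT := by
  revert h; revert x; decide

lemma tv_le_B_of_ne_top (x : TV) (h : x ≠ tT) : x ≤ tB := by
  revert h; revert x; decide

lemma tv_le_F_of_lt_B (x : TV) (h : x < tB) : x ≤ tF := by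
  revert h; revert x; decide

lemma tv_someone_top {P : Type*} (f : P → TV) (h : Someone f = tT) : ∃ p, f p = tT := by
  by_contra hc
  push_neg at hc
  have hle : Someone f ≤ tB := iSup_le fun p => tv_le_B_of_ne_top _ (hc p)
  rw [h] at hle
  exact absurd hle (by decide)

lemma tv_quorum_ge {P : Type*} (S : Semitopology P) (f : P → TV) (h : tB ≤ S.Quorum f) :
    ∃ O ∈ S.opens, O.Nonempty ∧ ∀ q ∈ O, tB ≤ f q := by
  by_contra hc
  push_neg at hc
  have hle : S.Quorum f ≤ tF := by
    apply iSup₂_le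
    rintro O ⟨hO1, hO2⟩
    obtain ⟨q, hq, hfq⟩ := hc O hO1 hO2
    exact le_trans (iInf₂_le q hq) (tv_le_F_of_lt_B _ hfq)
  exact absurd (le_trans h hle) (by decide)

theorem crusader_validity {P : Type*} (S : Semitopology P)
    (input echo1 echo2 output : P → CVal → TV)
    (h3t : S.ThreeTwined)
    (hEcho1Q : ∀ p v, echo1 p v = tT → Someone (fun q => input q v) = tT)
    (hEcho2Q : ∀ p v, echo2 p v = tT → tB ≤ S.Quorum (fun q => echo1 q v))
    (hOutputQ0 : ∀ p, output p CVal.v0 = tT → tB ≤ S.Quorum (fun q => echo2 q CVal.v0))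
    (hOutputQ1 : ∀ p, output p CVal.v1 = tT → tB ≤ S.Quorum (fun q => echo2 q CVal.v1))
    (hOutputQ' : ∀ p, output p CVal.vhalf = tT →
        tB ≤ S.Quorum (fun q => echo1 q CVal.v0) ∧ tB ≤ S.Quorum (fun q => echo1 q CVal.v1))
    (hCorrect : ∃ O ∈ S.opens, O.Nonempty ∧ ∀ q ∈ O, ∀ v : CVal,
        input q v ≠ tB ∧ echo1 q v ≠ tB ∧ echo2 q v ≠ tB ∧ output q v ≠ tB)
    (hCorrectInput : ∀ p, (∀ v : CVal, input p v ≠ tB) ∨ (∀ v : CVal, input p v = tB))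
    (hCorrectEcho1 : ∀ p, (∀ v : CVal, echo1 p v ≠ tB) ∨ (∀ v : CVal, echo1 p v = tB))
    (hCorrectEcho2 : ∀ p, (∀ v : CVal, echo2 p v ≠ tB) ∨ (∀ v : CVal, echo2 p v = tB))
    (hCorrectOutput : ∀ p, (∀ v : CVal, output p v ≠ tB) ∨ (∀ v : CVal, output p v = tB))
    (hInput : ∀ p, tB ≤ txor (input p CVal.v0) (input p CVal.v1) ⊓ tneg (input p CVal.vhalf))
    (hEcho201 : ∀ p (v v' : CVal), echo2 p v = tT → echo2 p v' = tT → v = v')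
    (hEcho1B : ∀ p v, (input p v = tT ∨ S.Contraquorum (fun q => echo1 q v) = tT) →
        tB ≤ echo1 p v)
    (hEcho2B : ∀ p, (∃ v'' : CVal, S.Quorum (fun q => echo1 q v'') = tT) →
        tB ≤ ⨆ v'' : CVal, echo2 p v'')
    (hOutputB : ∀ p v, S.Quorum (fun q => echo2 q v) = tT → tB ≤ output p v)
    (hOutputB' : ∀ p, S.Quorum (fun q => echo1 q CVal.v0) = tT ∧
        S.Quorum (fun q => echo1 q CVal.v1) = tT → tB ≤ output p CVal.vhalf) :
    ∀ v : CVal, (v = CVal.v0 ∨ v = CVal.v1) →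
      (Someone (fun q => output q v) = tT → Someone (fun q => input q v) = tT) ∧
      ((∀ p : P, tB ≤ input p v) →
        ∀ v' : CVal, Someone (fun q => output q v') = tT → v = v') := by
  obtain ⟨C, hCopen, hCne, hC⟩ := hCorrect
  have getQ : ∀ g : P → TV, tB ≤ S.Quorum g → ∃ q ∈ C, tB ≤ g q := by
    intro g hg
    obtain ⟨O, hO, hOne, hall⟩ := tv_quorum_ge S g hg
    obtain ⟨q, hq⟩ := h3t O C C hO hCopen hCopen hOne hCne hCne
    exact ⟨q, hq.1.2, hall q hq.1.1⟩
  have part1 : ∀ v : CVal, (v = CVal.v0 ∨ v = CVal.v1) →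
      Someone (fun q => output q v) = tT → Someone (fun q => input q v) = tT := by
    intro v hv hout
    obtain ⟨p, hp⟩ := tv_someone_top _ hout
    have hq2 : tB ≤ S.Quorum (fun q => echo2 q v) := by
      rcases hv with rfl | rfl
      · exact hOutputQ0 p hp
      · exact hOutputQ1 p hp
    obtain ⟨q, hqC, hq⟩ := getQ _ hq2
    have hqT : echo2 q v = tT := tv_eq_top _ hq (hC q hqC v).2.2.1
    obtain ⟨r, hrC, hr⟩ := getQ _ (hEcho2Q q v hqT)
    have hrT : echo1 r v = tT := tv_eq_top _ hr (hC r hrC v).2.1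
    exact hEcho1Q r v hrT
  intro v hv
  refine ⟨part1 v hv, ?_⟩
  intro hin v' hout'
  rcases hv with rfl | rfl
  · -- v = v0 : show input at v1 and vhalf are ≤ B everywhere
    have hb : ∀ p, input p CVal.v1 ≤ tB := by
      intro p
      have h1 := hInput p
      rw [le_inf_iff] at h1
      obtain ⟨hx, -⟩ := h1
      rcases hCorrectInput p with hA | hA
      · have ha' : input p CVal.v0 = tT := tv_eq_top _ (hin p) (hA _)
        by_contra hbb
        have hbT : input p CVal.v1 = tT := tv_top_of_not_le _ hbb
        rw [ha', hbT] at hx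
        exact absurd hx (by decide)
      · exact le_of_eq (hA CVal.v1)
    have hnotT1 : Someone (fun q => input q CVal.v1) ≠ tT := by
      have hle : Someone (fun q => input q CVal.v1) ≤ tB := iSup_le fun p => hb p
      intro h; rw [h] at hle; exact absurd hle (by decide)
    cases v' with
    | v0 => rfl
    | vhalf =>
      obtain ⟨p, hp⟩ := tv_someone_top _ hout'
      obtain ⟨q, hqC, hq⟩ := getQ _ (hOutputQ' p hp).2
      have hqT : echo1 q CVal.v1 = tT := tv_eq_top _ hq (hC q hqC CVal.v1).2.1
      exact absurd (hEcho1Q q CVal.v1 hqT) hnotT1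
    | v1 => exact absurd (part1 CVal.v1 (Or.inr rfl) hout') hnotT1
  · -- v = v1
    have hb : ∀ p, input p CVal.v0 ≤ tB := by
      intro p
      have h1 := hInput p
      rw [le_inf_iff] at h1
      obtain ⟨hx, -⟩ := h1
      rcases hCorrectInput p with hA | hA
      · have ha' : input p CVal.v1 = tT := tv_eq_top _ (hin p) (hA _)
        by_contra hbb
        have hbT : input p CVal.v0 = tT := tv_top_of_not_le _ hbb
        rw [ha', hbT] at hx
        exact absurd hx (by decide)
      · exact le_of_eq (hA CVal.v0)
    have hnotT0 : Someone (fun q => input q CVal.v0) ≠ tT := by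
      have hle : Someone (fun q => input q CVal.v0) ≤ tB := iSup_le fun p => hb p
      intro h; rw [h] at hle; exact absurd hle (by decide)
    cases v' with
    | v1 => rfl
    | vhalf =>
      obtain ⟨p, hp⟩ := tv_someone_top _ hout'
      obtain ⟨q, hqC, hq⟩ := getQ _ (hOutputQ' p hp).1
      have hqT : echo1 q CVal.v0 = tT := tv_eq_top _ hq (hC q hqC CVal.v0).2.1
      exact absurd (hEcho1Q q CVal.v0 hqT) hnotT0
    | v0 => exact absurd (part1 CVal.v0 (Or.inl rfl) hout') hnotT0
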